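/- arXiv:2305.18227 — 2 statements merged into one kernel-verified Lean document; each statement's English description precedes it below -/
import Mathlib

section
/- For any instance I=(p_t)_{t∈[n]} and any prediction Î=(p̂_t)_{t∈[n]} on the same horizon, |opt(I) − opt(Î)| ≤ τ([1,n],I,Î); that is, the auxiliary error on the full horizon satisfies Lipschitzness. -/
open Finset

/-- Waiting time from `t` until the first acknowledgment in `X` at or after `t` (`0` if none). -/
noncomputable def ackWait (X : Finset ℕ) (t : ℕ) : ℕ :=
  if h : (X.filter fun x => t ≤ x).Nonempty then (X.filter fun x => t ≤ x).min' h - t else 0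

/-- Delay cost `D(I,X)` of solution `X` for the instance `p` on horizon `{a, …, b}`
with delay parameter `d`. -/
noncomputable def delayCost (d : ℝ) (a b : ℕ) (p : ℕ → ℝ) (X : Finset ℕ) : ℝ :=
  (1 / d) * ∑ t ∈ Finset.Icc a b, p t * (ackWait X t : ℝ)

/-- Total cost `F(I,X) = |X| + D(I,X)`. -/
noncomputable def cost (d : ℝ) (a b : ℕ) (p : ℕ → ℝ) (X : Finset ℕ) : ℝ :=
  (X.card : ℝ) + delayCost d a b p X

/-- Feasibility of `X` for the instance `p` on horizon `{a,…,b}`: `X` is a nonempty subset of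
the horizon and every time with positive demand has an acknowledgment at or after it. -/
def Feasible (a b : ℕ) (p : ℕ → ℝ) (X : Finset ℕ) : Prop :=
  X.Nonempty ∧ X ⊆ Finset.Icc a b ∧ ∀ t ∈ Finset.Icc a b, 0 < p t → ∃ x ∈ X, t ≤ x

/-- Optimal cost `opt(I)` of the instance `p` on horizon `{a,…,b}`. -/
noncomputable def opt (d : ℝ) (a b : ℕ) (p : ℕ → ℝ) : ℝ :=
  sInf {c : ℝ | ∃ X : Finset ℕ, Feasible a b p X ∧ cost d a b p X = c}

/-- `Δ(I,Y,t) = D(I,Y) − D(I,Y ∪ {t})`. -/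
noncomputable def delta (d : ℝ) (a b : ℕ) (p : ℕ → ℝ) (Y : Finset ℕ) (t : ℕ) : ℝ :=
  delayCost d a b p Y - delayCost d a b p (insert t Y)

/-- Auxiliary error `τ([t1,t2], I, Î) = opt(O(I⟨t1,t2⟩,Î⟨t1,t2⟩)) − opt(U(I⟨t1,t2⟩,Î⟨t1,t2⟩))`. -/
noncomputable def auxErr (d : ℝ) (t1 t2 : ℕ) (p q : ℕ → ℝ) : ℝ :=
  opt d t1 t2 (fun t => max (p t) (q t)) - opt d t1 t2 (fun t => min (p t) (q t))


lemma cost_nonneg (d : ℝ) (hd : 0 < d) (a b : ℕ) (p : ℕ → ℝ) (hp : ∀ t, 0 ≤ p t)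
    (X : Finset ℕ) : 0 ≤ cost d a b p X := by
  unfold cost delayCost
  have h1 : (0:ℝ) ≤ ∑ t ∈ Finset.Icc a b, p t * (ackWait X t : ℝ) :=
    Finset.sum_nonneg fun t _ => mul_nonneg (hp t) (Nat.cast_nonneg _)
  positivity

lemma opt_le_cost (d : ℝ) (hd : 0 < d) (a b : ℕ) (p : ℕ → ℝ) (hp : ∀ t, 0 ≤ p t)
    (X : Finset ℕ) (hX : Feasible a b p X) : opt d a b p ≤ cost d a b p X := by
  apply csInf_le
  · exact ⟨0, by rintro c ⟨Y, hY, rfl⟩; exact cost_nonneg d hd a b p hp Y⟩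
  · exact ⟨X, hX, rfl⟩

lemma opt_mono (d : ℝ) (hd : 0 < d) (a b : ℕ) (p p' : ℕ → ℝ)
    (hp : ∀ t, 0 ≤ p t) (hle : ∀ t, p t ≤ p' t)
    (hfe : ∃ X, Feasible a b p' X) : opt d a b p ≤ opt d a b p' := by
  obtain ⟨X0, hX0⟩ := hfe
  refine le_csInf ⟨cost d a b p' X0, X0, hX0, rfl⟩ ?_
  rintro c ⟨X, hX, rfl⟩
  have hfeas : Feasible a b p X :=
    ⟨hX.1, hX.2.1, fun t ht hpt => hX.2.2 t ht (lt_of_lt_of_le hpt (hle t))⟩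
  refine le_trans (opt_le_cost d hd a b p hp X hfeas) ?_
  unfold cost delayCost
  have : ∑ t ∈ Finset.Icc a b, p t * (ackWait X t : ℝ)
      ≤ ∑ t ∈ Finset.Icc a b, p' t * (ackWait X t : ℝ) :=
    Finset.sum_le_sum fun t _ => mul_le_mul_of_nonneg_right (hle t) (Nat.cast_nonneg _)
  have hd' : (0:ℝ) ≤ 1 / d := by positivity
  nlinarith

lemma opt_zero_of_empty (d : ℝ) (b a : ℕ) (h : b < a) (p : ℕ → ℝ) :
    opt d a b p = 0 := by
  unfold opt
  convert Real.sInf_empty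
  rw [Set.eq_empty_iff_forall_notMem]
  rintro c ⟨X, ⟨⟨x, hx⟩, hsub, -⟩, -⟩
  have := hsub hx
  rw [Finset.Icc_eq_empty_of_lt h] at this
  exact absurd this (Finset.notMem_empty x)

/-- the auxiliary error on the full horizon satisfies Lipschitzness:
`|opt(I) − opt(Î)| ≤ τ([1,n],I,Î)`. -/
theorem auxErr_lipschitz (d : ℝ) (hd : 0 < d) (n : ℕ) (p q : ℕ → ℝ)
    (hp : ∀ t, 0 ≤ p t) (hq : ∀ t, 0 ≤ q t) :
    |opt d 1 n p - opt d 1 n q| ≤ auxErr d 1 n p q := by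
  unfold auxErr
  rcases Nat.eq_zero_or_pos n with hn | hn
  · subst hn
    rw [opt_zero_of_empty d 0 1 Nat.zero_lt_one, opt_zero_of_empty d 0 1 Nat.zero_lt_one,
        opt_zero_of_empty d 0 1 Nat.zero_lt_one, opt_zero_of_empty d 0 1 Nat.zero_lt_one]
    simp
  · have hfe : ∀ r : ℕ → ℝ, ∃ X, Feasible 1 n r X := by
      intro r
      refine ⟨{n}, Finset.singleton_nonempty n, ?_, ?_⟩
      · intro x hx
        rw [Finset.mem_singleton] at hx
        rw [hx]
        exact Finset.mem_Icc.mpr ⟨hn, le_refl n⟩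
      · intro t ht _
        exact ⟨n, Finset.mem_singleton_self n, (Finset.mem_Icc.mp ht).2⟩
    have hmin : ∀ t, 0 ≤ min (p t) (q t) := fun t => le_min (hp t) (hq t)
    have h1 : opt d 1 n p ≤ opt d 1 n (fun t => max (p t) (q t)) :=
      opt_mono d hd 1 n _ _ hp (fun t => le_max_left _ _) (hfe _)
    have h2 : opt d 1 n q ≤ opt d 1 n (fun t => max (p t) (q t)) :=
      opt_mono d hd 1 n _ _ hq (fun t => le_max_right _ _) (hfe _)
    have h3 : opt d 1 n (fun t => min (p t) (q t)) ≤ opt d 1 n p :=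
      opt_mono d hd 1 n _ _ hmin (fun t => min_le_left _ _) (hfe _)
    have h4 : opt d 1 n (fun t => min (p t) (q t)) ≤ opt d 1 n q :=
      opt_mono d hd 1 n _ _ hmin (fun t => min_le_right _ _) (hfe _)
    rw [abs_sub_le_iff]
    constructor <;> linarith
end

section
/- Let Î be an instance on [n] and let X̂ = {n}. For any partition of [n] into consecutive intervals with right endpoints y_1 < ⋯ < y_l = n, letting Î_i be the restriction of Î to the i-th interval, it holds that D(Î, X̂) ≤ ∑_{i=1}^{l} D(Î_i, {y_i}) + ∑_{i=1}^{l} Δ(Î, X̂, y_i), where each Δ is taken on the full instance Î. -/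
open Finset

/-! With the single acknowledgment at `n`, a request at time `t` of the `i`-th interval waits
`n - t = (y i - t) + (n - y i)`. The first part is its delay in the restricted instance
acknowledged at `y i`. Summed over the interval, the second part is at most
`Δ(Î, {n}, y i) = (n - y i) / d * ∑_{t ≤ y i} p t`, the saving an extra acknowledgment at `y i`
brings to every request up to `y i`. -/

theorem sum_Ioc_eq_sum_sum_Ioc {M : Type*} [AddCommMonoid M] (f : ℕ → M) {y : ℕ → ℕ} {l : ℕ}
    (hy : MonotoneOn y (Set.Iic l)) :
    ∑ t ∈ Ioc (y 0) (y l), f t = ∑ i ∈ Icc 1 l, ∑ t ∈ Ioc (y (i - 1)) (y i), f t := by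
  induction l with
  | zero => simp
  | succ k ih =>
    have h0k : y 0 ≤ y k := hy (by simp) (by simp) k.zero_le
    have hkk : y k ≤ y (k + 1) := hy (by simp) (by simp) k.le_succ
    rw [← sum_Ioc_consecutive f h0k hkk, sum_Icc_succ_top (by omega),
      ih (hy.mono (Set.Iic_subset_Iic.2 k.le_succ))]
    simp

theorem ackWait_singleton (m t : ℕ) : ackWait {m} t = m - t := by
  by_cases h : t ≤ m <;> simp [ackWait, filter_singleton, h]
  omega

theorem ackWait_insert_singleton {m n : ℕ} (hmn : m ≤ n) (t : ℕ) :
    ackWait (insert m {n}) t = if t ≤ m then m - t else n - t := by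
  by_cases hm : t ≤ m
  · simp [ackWait, filter_insert, filter_singleton, hm, hm.trans hmn, hmn]
  · by_cases hn : t ≤ n <;> simp [ackWait, filter_insert, filter_singleton, hm, hn]
    omega

section delayCost

variable {d : ℝ} {p : ℕ → ℝ}

theorem delayCost_eq_sum_partition (X : Finset ℕ) {y : ℕ → ℕ} {l : ℕ}
    (hy : MonotoneOn y (Set.Iic l)) :
    delayCost d (y 0 + 1) (y l) p X
      = ∑ i ∈ Icc 1 l, delayCost d (y (i - 1) + 1) (y i) p X := by
  simp only [delayCost, Icc_add_one_left_eq_Ioc, ← mul_sum]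
  rw [sum_Ioc_eq_sum_sum_Ioc _ hy]

theorem delayCost_singleton_sub_singleton (a : ℕ) {m n : ℕ} (hmn : m ≤ n) :
    delayCost d a m p {n} - delayCost d a m p {m} = 1 / d * ((n - m) * ∑ t ∈ Icc a m, p t) := by
  simp only [delayCost]
  rw [← mul_sub, ← sum_sub_distrib]
  congr 1
  rw [mul_sum]
  refine Finset.sum_congr rfl fun t ht => ?_
  have htm : t ≤ m := (mem_Icc.1 ht).2
  rw [ackWait_singleton, ackWait_singleton, Nat.cast_sub (htm.trans hmn), Nat.cast_sub htm]
  ring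

theorem delta_singleton (a : ℕ) {m n : ℕ} (hmn : m ≤ n) :
    delta d a n p {n} m = 1 / d * ((n - m) * ∑ t ∈ Icc a m, p t) := by
  have hfilter : (Icc a n).filter (· ≤ m) = Icc a m := by
    ext t
    simp only [mem_filter, mem_Icc]
    omega
  simp only [delta, delayCost]
  rw [← mul_sub, ← sum_sub_distrib]
  congr 1
  rw [← hfilter, sum_filter, mul_sum]
  refine Finset.sum_congr rfl fun t ht => ?_
  rw [ackWait_singleton, ackWait_insert_singleton hmn]
  split_ifs with htm
  · rw [Nat.cast_sub (htm.trans hmn), Nat.cast_sub htm]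
    ring
  · ring

theorem delayCost_singleton_le_add_delta (hd : 0 ≤ d) (hp : ∀ t, 0 ≤ p t) {a b m n : ℕ}
    (hba : b ≤ a) (hmn : m ≤ n) :
    delayCost d a m p {n} ≤ delayCost d a m p {m} + delta d b n p {n} m := by
  rw [← sub_le_iff_le_add', delayCost_singleton_sub_singleton a hmn, delta_singleton b hmn]
  have hnm : (0 : ℝ) ≤ n - m := sub_nonneg.2 (by exact_mod_cast hmn)
  gcongr
  exact fun t _ _ => hp t

end delayCost

theorem delay_single_ack_le_partition_general (d : ℝ) (hd : 0 < d) (n l : ℕ)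
    (p : ℕ → ℝ) (hp : ∀ t, 0 ≤ p t)
    (y : ℕ → ℕ) (hy0 : y 0 = 0) (hmono : ∀ i < l, y i < y (i + 1)) (hyl : y l = n) :
    delayCost d 1 n p {n}
      ≤ ∑ i ∈ Finset.Icc 1 l, delayCost d (y (i - 1) + 1) (y i) p {y i}
        + ∑ i ∈ Finset.Icc 1 l, delta d 1 n p {n} (y i) := by
  have hy : MonotoneOn y (Set.Iic l) :=
    (strictMonoOn_Iic_of_lt_succ fun i hi => by simpa using hmono i hi).monotoneOn
  calc delayCost d 1 n p {n}
      = ∑ i ∈ Icc 1 l, delayCost d (y (i - 1) + 1) (y i) p {n} := by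
        rw [← delayCost_eq_sum_partition _ hy, hy0, hyl]
    _ ≤ ∑ i ∈ Icc 1 l, (delayCost d (y (i - 1) + 1) (y i) p {y i} + delta d 1 n p {n} (y i)) :=
        sum_le_sum fun i hi => delayCost_singleton_le_add_delta hd.le hp (by omega)
          (hyl ▸ hy (mem_Icc.1 hi).2 (Set.mem_Iic.2 le_rfl) (mem_Icc.1 hi).2)
    _ = _ := sum_add_distrib

/-- for `X̂ = {n}` and any partition of `[n]` into consecutive intervals with
right endpoints `y_1 < ⋯ < y_l = n`,
`D(Î,X̂) ≤ ∑_{i=1}^l D(Î_i,{y_i}) + ∑_{i=1}^l Δ(Î,X̂,y_i)`, where each `Δ` is taken on the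
full instance `Î`. -/
theorem delay_single_ack_le_partition (d : ℝ) (hd : 0 < d) (n l : ℕ) (hl : 0 < l)
    (p : ℕ → ℝ) (hp : ∀ t, 0 ≤ p t)
    (y : ℕ → ℕ) (hy0 : y 0 = 0) (hmono : ∀ i < l, y i < y (i + 1)) (hyl : y l = n) :
    delayCost d 1 n p {n}
      ≤ ∑ i ∈ Finset.Icc 1 l, delayCost d (y (i - 1) + 1) (y i) p {y i}
        + ∑ i ∈ Finset.Icc 1 l, delta d 1 n p {n} (y i) :=
  delay_single_ack_le_partition_general d hd n l p hp y hy0 hmono hyl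
end
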